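/- Let F and G be empirical distribution functions of real numbers λ_1 ≤ … ≤ λ_n and x_1 ≤ … ≤ x_n respectively. Then the Lévy distance satisfies L³(F, G) ≤ (1/n) Σ_{i=1}^n |λ_i − x_i|² ≤ (max_{1≤i≤n} |λ_i − x_i|)². -/

import Mathlib

open Finset

/-- The Lévy distance between two distribution functions. -/
noncomputable def levyDist (F G : ℝ → ℝ) : ℝ :=
  sInf {ε : ℝ | 0 < ε ∧ ∀ x : ℝ, F (x - ε) - ε ≤ G x ∧ G x ≤ F (x + ε) + ε}

/-- The empirical distribution function of the points `y 0, …, y (n-1)`. -/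
noncomputable def empDF {n : ℕ} (y : Fin n → ℝ) (ξ : ℝ) : ℝ :=
  ((Finset.univ.filter fun i : Fin n => y i ≤ ξ).card : ℝ) / n

/-!
If more than `ε n` of the points `z i` lie at or below `ξ` while their partners `y i` lie above
`ξ + ε`, each of these indices contributes more than `ε ^ 2` to `∑ |y i - z i| ^ 2`, which then
exceeds `n ε ^ 3`. So once `n ε ^ 3` dominates that sum, `ε` satisfies both Lévy inequalities,
and `L ^ 3` is bounded by the mean squared difference.
-/

lemma levyDist_nonneg (F G : ℝ → ℝ) : 0 ≤ levyDist F G :=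
  Real.sInf_nonneg fun _ hε => hε.1.le

lemma levyDist_le_of_forall_lt {F G : ℝ → ℝ} {c : ℝ} (hc : 0 ≤ c)
    (h : ∀ ε, c < ε → ∀ x, F (x - ε) - ε ≤ G x ∧ G x ≤ F (x + ε) + ε) :
    levyDist F G ≤ c :=
  le_of_forall_gt_imp_ge_of_dense fun ε hε =>
    csInf_le ⟨0, fun _ hδ => hδ.1.le⟩ ⟨hc.trans_lt hε, h ε hε⟩

lemma card_filter_sub_card_filter_mul_sq_le_sum {n : ℕ} (y z : Fin n → ℝ) {ε : ℝ} (hε : 0 ≤ ε)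
    (ξ : ℝ) :
    (((univ.filter fun i => z i ≤ ξ).card : ℝ) - (univ.filter fun i => y i ≤ ξ + ε).card) * ε ^ 2
      ≤ ∑ i, |y i - z i| ^ 2 := by
  set Sz := univ.filter fun i => z i ≤ ξ
  set Sy := univ.filter fun i => y i ≤ ξ + ε
  have hcard : ((Sz.card : ℝ) - Sy.card) ≤ (Sz \ Sy).card := by
    rw [sub_le_iff_le_add]
    exact_mod_cast card_le_card_sdiff_add_card
  have hfar : ∀ i ∈ Sz \ Sy, ε ^ 2 ≤ |y i - z i| ^ 2 := by
    intro i hi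
    simp only [Sz, Sy, mem_sdiff, mem_filter, mem_univ, true_and, not_le] at hi
    exact pow_le_pow_left₀ hε (by rw [abs_of_pos (by linarith)]; linarith) 2
  calc ((Sz.card : ℝ) - Sy.card) * ε ^ 2 ≤ (Sz \ Sy).card * ε ^ 2 :=
        mul_le_mul_of_nonneg_right hcard (sq_nonneg ε)
    _ ≤ ∑ i ∈ Sz \ Sy, |y i - z i| ^ 2 := by
        simpa only [nsmul_eq_mul] using card_nsmul_le_sum _ _ _ hfar
    _ ≤ ∑ i, |y i - z i| ^ 2 :=
        sum_le_sum_of_subset_of_nonneg (subset_univ _) fun _ _ _ => sq_nonneg _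

lemma empDF_le_empDF_add_add {n : ℕ} (y z : Fin n → ℝ) {ε : ℝ} (hε : 0 < ε)
    (h : ∑ i, |y i - z i| ^ 2 ≤ n * ε ^ 3) (ξ : ℝ) :
    empDF z ξ ≤ empDF y (ξ + ε) + ε := by
  set d := ((univ.filter fun i => z i ≤ ξ).card : ℝ) - (univ.filter fun i => y i ≤ ξ + ε).card
  have hd : d ≤ ε * n := by
    refine le_of_mul_le_mul_right (a := ε ^ 2) ?_ (by positivity)
    linarith [card_filter_sub_card_filter_mul_sq_le_sum y z hε.le ξ]
  have hdiff : empDF z ξ - empDF y (ξ + ε) = d / n := by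
    simp only [empDF, d, sub_div]
  have hratio : d / n ≤ ε := div_le_of_le_mul₀ n.cast_nonneg hε.le hd
  linarith

theorem levyDist_empDF_pow_three_le {n : ℕ} (y z : Fin n → ℝ) :
    levyDist (empDF y) (empDF z) ^ 3 ≤ (1 / (n : ℝ)) * ∑ i, |y i - z i| ^ 2 := by
  set S := (1 / (n : ℝ)) * ∑ i, |y i - z i| ^ 2
  have hS : 0 ≤ S := by positivity
  set c := S ^ ((3 : ℕ)⁻¹ : ℝ)
  have hc : 0 ≤ c := Real.rpow_nonneg hS _
  have hc3 : c ^ 3 = S := Real.rpow_inv_natCast_pow hS three_ne_zero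
  have hL : levyDist (empDF y) (empDF z) ≤ c := by
    refine levyDist_le_of_forall_lt hc fun ε hcε ξ => ?_
    have hε : 0 < ε := hc.trans_lt hcε
    have hsum : ∑ i, |y i - z i| ^ 2 ≤ n * ε ^ 3 := by
      have hSε : S ≤ ε ^ 3 := hc3 ▸ (pow_lt_pow_left₀ hcε hc three_ne_zero).le
      rcases n.eq_zero_or_pos with rfl | hn
      · simp
      · rwa [← div_le_iff₀' (by positivity), ← one_div_mul_eq_div]
    have hsum' : ∑ i, |z i - y i| ^ 2 ≤ n * ε ^ 3 := by
      simpa only [abs_sub_comm] using hsum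
    refine ⟨?_, empDF_le_empDF_add_add y z hε hsum ξ⟩
    linarith [sub_add_cancel ξ ε ▸ empDF_le_empDF_add_add z y hε hsum' (ξ - ε)]
  calc levyDist (empDF y) (empDF z) ^ 3 ≤ c ^ 3 :=
        pow_le_pow_left₀ (levyDist_nonneg _ _) hL 3
    _ = S := hc3

lemma inv_card_mul_sum_sq_le_sup'_sq {ι : Type*} [Fintype ι] (hι : (univ : Finset ι).Nonempty)
    (f : ι → ℝ) (hf : ∀ i, 0 ≤ f i) :
    (1 / (Fintype.card ι : ℝ)) * ∑ i, f i ^ 2 ≤ (univ.sup' hι f) ^ 2 := by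
  have hsq : ∀ i ∈ univ, f i ^ 2 ≤ (univ.sup' hι f) ^ 2 := fun i hi =>
    pow_le_pow_left₀ (hf i) (le_sup' f hi) 2
  have hcard : (0 : ℝ) < Fintype.card ι := by exact_mod_cast Fintype.card_pos_iff.mpr hι.to_type
  rw [one_div_mul_eq_div, div_le_iff₀' hcard]
  simpa only [nsmul_eq_mul, card_univ] using sum_le_card_nsmul _ _ _ hsq

theorem stmt11_general (n : ℕ) (hn : 0 < n) (l x : Fin n → ℝ) :
    levyDist (empDF l) (empDF x) ^ 3 ≤ (1 / (n : ℝ)) * ∑ i : Fin n, |l i - x i| ^ 2 ∧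
    (1 / (n : ℝ)) * ∑ i : Fin n, |l i - x i| ^ 2 ≤
      (Finset.univ.sup' ⟨⟨0, hn⟩, Finset.mem_univ _⟩ fun i : Fin n => |l i - x i|) ^ 2 :=
  ⟨levyDist_empDF_pow_three_le l x, by
    simpa only [Fintype.card_fin] using
      inv_card_mul_sum_sq_le_sup'_sq _ (fun i => |l i - x i|) fun i => abs_nonneg _⟩

/-- Lemma 2.3 of Bai (1999): the cubed Lévy distance between the empirical
distribution functions of `λ_1 ≤ … ≤ λ_n` and `x_1 ≤ … ≤ x_n` is bounded by the mean
squared difference, which in turn is bounded by the squared maximal difference. -/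
theorem stmt11 (n : ℕ) (hn : 0 < n) (l x : Fin n → ℝ)
    (hl : Monotone l) (hx : Monotone x) :
    levyDist (empDF l) (empDF x) ^ 3 ≤ (1 / (n : ℝ)) * ∑ i : Fin n, |l i - x i| ^ 2 ∧
    (1 / (n : ℝ)) * ∑ i : Fin n, |l i - x i| ^ 2 ≤
      (Finset.univ.sup' ⟨⟨0, hn⟩, Finset.mem_univ _⟩ fun i : Fin n => |l i - x i|) ^ 2 :=
  stmt11_general n hn l x
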